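/- Let μ_p and μ_u be probability measures on a measurable space X with μ_p ≪ μ_u, let g : X → Y be a measurable map into a measurable space Y, and let h : Y → ℝ≥0∞ be measurable with (dμ_p/dμ_u)(x) = h(g(x)) for μ_u-almost every x. Then sSup {a ∈ [0,1] : a•μ_p ≤ μ_u} = sSup {a ∈ [0,1] : a•(μ_p.map g) ≤ μ_u.map g}. -/
import Mathlib

open MeasureTheory ENNReal

lemma smul_ac_aux {Z : Type*} [MeasurableSpace Z] (c : ℝ≥0∞) (ν ξ : Measure Z)
    (hνξ : ν ≪ ξ) : c • ν ≪ ξ := by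
  refine Measure.AbsolutelyContinuous.mk fun s hs hs0 => ?_
  rw [Measure.smul_apply, hνξ hs0, smul_zero]

lemma map_withDensity_comp {X Y : Type*} [MeasurableSpace X] [MeasurableSpace Y]
    (μ : Measure X) {g : X → Y} (hg : Measurable g) {h : Y → ℝ≥0∞} (hh : Measurable h) :
    (μ.withDensity (fun x => h (g x))).map g = (μ.map g).withDensity h := by
  ext s hs
  rw [Measure.map_apply hg hs, withDensity_apply _ (hg hs), withDensity_apply _ hs,
    setLIntegral_map hs hh hg]

/-- α*-preservation (part of the paper's Lemma 1): a transformation `g` through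
which the density ratio `dμp/dμu` factors preserves the identifiable upper
bound `α* = sSup {a ∈ [0,1] : a • μp ≤ μu}` on the mixing proportion. -/
theorem ntc_preserves_alpha_star {X Y : Type*} [MeasurableSpace X] [MeasurableSpace Y]
    (μp μu : Measure X) [IsProbabilityMeasure μp] [IsProbabilityMeasure μu]
    (hac : μp ≪ μu) (g : X → Y) (hg : Measurable g) (h : Y → ℝ≥0∞) (hh : Measurable h)
    (hfac : ∀ᵐ x ∂μu, μp.rnDeriv μu x = h (g x)) :
    sSup {a : ℝ | a ∈ Set.Icc (0 : ℝ) 1 ∧ ENNReal.ofReal a • μp ≤ μu}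
      = sSup {a : ℝ | a ∈ Set.Icc (0 : ℝ) 1 ∧ ENNReal.ofReal a • μp.map g ≤ μu.map g} := by
  have hμp : μu.withDensity (fun x => h (g x)) = μp := by
    rw [← withDensity_congr_ae hfac, Measure.withDensity_rnDeriv_eq _ _ hac]
  have hmap : μp.map g = (μu.map g).withDensity h := by
    rw [← hμp, map_withDensity_comp μu hg hh]
  have hmac : μp.map g ≪ μu.map g := hmap ▸ withDensity_absolutelyContinuous _ _
  have hrd : (μp.map g).rnDeriv (μu.map g) =ᵐ[μu.map g] h := by
    rw [hmap]; exact Measure.rnDeriv_withDensity _ hh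
  haveI : IsProbabilityMeasure (μp.map g) := Measure.isProbabilityMeasure_map hg.aemeasurable
  haveI : IsProbabilityMeasure (μu.map g) := Measure.isProbabilityMeasure_map hg.aemeasurable
  have key : ∀ a : ℝ, (ENNReal.ofReal a • μp ≤ μu ↔
      ENNReal.ofReal a • μp.map g ≤ μu.map g) := by
    intro a
    set c : ℝ≥0∞ := ENNReal.ofReal a with hc
    have hcne : c ≠ ∞ := ENNReal.ofReal_ne_top
    have h1 : c • μp ≤ μu ↔ ∀ᵐ x ∂μu, c * h (g x) ≤ 1 := by
      rw [← Measure.rnDeriv_le_one_iff_le (smul_ac_aux c μp μu hac)]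
      constructor
      · intro H
        filter_upwards [H, Measure.rnDeriv_smul_left_of_ne_top μp μu hcne, hfac]
          with x hx1 hx2 hx3
        rw [← hx3, ← smul_eq_mul, ← Pi.smul_apply, ← hx2]
        exact hx1
      · intro H
        filter_upwards [H, Measure.rnDeriv_smul_left_of_ne_top μp μu hcne, hfac]
          with x hx1 hx2 hx3
        rw [hx2, Pi.smul_apply, smul_eq_mul, hx3]
        exact hx1
    have h2 : c • μp.map g ≤ μu.map g ↔ ∀ᵐ y ∂(μu.map g), c * h y ≤ 1 := by
      rw [← Measure.rnDeriv_le_one_iff_le (smul_ac_aux c (μp.map g) (μu.map g) hmac)]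
      constructor
      · intro H
        filter_upwards [H, Measure.rnDeriv_smul_left_of_ne_top (μp.map g) (μu.map g) hcne, hrd]
          with y hy1 hy2 hy3
        rw [← hy3, ← smul_eq_mul, ← Pi.smul_apply, ← hy2]
        exact hy1
      · intro H
        filter_upwards [H, Measure.rnDeriv_smul_left_of_ne_top (μp.map g) (μu.map g) hcne, hrd]
          with y hy1 hy2 hy3
        rw [hy2, Pi.smul_apply, smul_eq_mul, hy3]
        exact hy1
    rw [h1, h2]
    have hms : MeasurableSet {y : Y | c * h y ≤ 1} :=
      measurableSet_le (hh.const_mul c) measurable_const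
    rw [Filter.eventually_iff, Filter.eventually_iff, MeasureTheory.mem_ae_map_iff hg.aemeasurable hms]
    exact Iff.rfl
  congr 1
  ext a
  exact and_congr Iff.rfl (key a)
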